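/- Let Σ_ρ = (1-ρ)I_p + ρ·1_p 1_p^T with 0 ≤ ρ < 1 and let S ⊆ {1,…,p} have even cardinality s ≥ 2. Then there exists v ∈ ℝ^p with ‖v_S‖₁ = 1, ‖v_{S^c}‖₁ ≤ 3, and s·v^T Σ_ρ v = 1 - ρ. Combined with the lower bound, the squared compatibility constant equals exactly 1 - ρ when s is even. -/

import Mathlib

/-!
Writing `Σ_ρ = (1 - ρ) I + ρ 𝟙𝟙ᵀ`, the quadratic form is `vᵀ Σ_ρ v = (1 - ρ) ‖v‖₂² + ρ (∑ vᵢ)²`.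
The lower bound `1 - ρ` follows from Cauchy–Schwarz on `S`, `1 = ‖v_S‖₁² ≤ s ‖v‖₂²`, and
`ρ (∑ vᵢ)² ≥ 0`. It is attained because `s` is even: put `+1/s` on half of `S` and `-1/s` on the
other half, so that `∑ vᵢ = 0` and `s ‖v‖₂² = 1`.
-/

open Matrix BigOperators Finset

section
variable {ι : Type*} [Fintype ι]

theorem dotProduct_smul_one_add_smul_ones_mulVec [DecidableEq ι] {R : Type*} [CommRing R]
    (a b : R) (v : ι → R) :
    v ⬝ᵥ ((a • (1 : Matrix ι ι R) + b • Matrix.of fun _ _ => (1 : R)) *ᵥ v) =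
      a * ∑ i, v i ^ 2 + b * (∑ i, v i) ^ 2 := by
  have hones : (Matrix.of fun _ _ => (1 : R) : Matrix ι ι R) *ᵥ v = fun _ => ∑ i, v i := by
    ext; simp [mulVec, dotProduct]
  rw [add_mulVec, smul_mulVec, smul_mulVec, one_mulVec, hones, dotProduct_add,
    dotProduct_smul, dotProduct_smul]
  simp [dotProduct, sq, sum_mul]

theorem sq_sum_abs_le_card_mul_sum_sq (S : Finset ι) (v : ι → ℝ) :
    (∑ j ∈ S, |v j|) ^ 2 ≤ #S * ∑ i, v i ^ 2 := calc
  (∑ j ∈ S, |v j|) ^ 2 ≤ #S * ∑ j ∈ S, |v j| ^ 2 := sq_sum_le_card_mul_sum_sq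
  _ ≤ #S * ∑ i, v i ^ 2 := by
    simp only [sq_abs]
    exact mul_le_mul_of_nonneg_left
      (sum_le_sum_of_subset_of_nonneg (subset_univ S) fun i _ _ => sq_nonneg (v i)) (by positivity)

theorem one_sub_le_card_mul_quadratic (S : Finset ι) {ρ : ℝ} (hρ0 : 0 ≤ ρ) (hρ1 : ρ ≤ 1)
    {v : ι → ℝ} (hv : ∑ j ∈ S, |v j| = 1) :
    1 - ρ ≤ #S * ((1 - ρ) * ∑ i, v i ^ 2 + ρ * (∑ i, v i) ^ 2) := by
  have h := sq_sum_abs_le_card_mul_sum_sq S v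
  rw [hv, one_pow] at h
  have : 0 ≤ (#S : ℝ) * (ρ * (∑ i, v i) ^ 2) := by positivity
  nlinarith [sub_nonneg.mpr hρ1]

theorem exists_sum_eq_zero_abs_eq_ite [DecidableEq ι] (S : Finset ι) (hS : Even #S) :
    ∃ u : ι → ℝ, (∀ j, |u j| = if j ∈ S then 1 else 0) ∧ ∑ j, u j = 0 := by
  obtain ⟨T, hTS, hT⟩ := exists_subset_card_eq (s := S) (n := #S / 2) (Nat.div_le_self _ _)
  have hcard : #(S \ T) = #T := by
    rw [card_sdiff_of_subset hTS, hT]; obtain ⟨k, hk⟩ := hS; omega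
  refine ⟨fun j => (if j ∈ T then 1 else 0) - (if j ∈ S \ T then 1 else 0), fun j => ?_, ?_⟩
  · by_cases hjT : j ∈ T
    · simp [hjT, hTS hjT]
    · by_cases hjS : j ∈ S <;> simp [hjT, hjS]
  · simp only [sum_sub_distrib, sum_ite_mem, univ_inter, sum_const, nsmul_one, hcard, sub_self]

theorem exists_abs_sum_eq_one_sum_eq_zero [DecidableEq ι] {S : Finset ι} (hne : S.Nonempty)
    (hS : Even #S) :
    ∃ v : ι → ℝ, ∑ j ∈ S, |v j| = 1 ∧ (∀ j ∉ S, v j = 0) ∧ ∑ i, v i = 0 ∧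
      #S * ∑ i, v i ^ 2 = 1 := by
  obtain ⟨u, hu_abs, hu_sum⟩ := exists_sum_eq_zero_abs_eq_ite S hS
  have hcard : (#S : ℝ) ≠ 0 := Nat.cast_ne_zero.2 hne.card_pos.ne'
  have hv_abs (j) : |(#S : ℝ)⁻¹ * u j| = if j ∈ S then (#S : ℝ)⁻¹ else 0 := by
    rw [abs_mul, abs_inv, Nat.abs_cast, hu_abs]
    split_ifs <;> simp
  refine ⟨fun j => (#S : ℝ)⁻¹ * u j, ?_, fun j hj => abs_eq_zero.1 (by simp [hv_abs, hj]),
    ?_, ?_⟩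
  · simp [hv_abs, sum_ite_mem, hcard]
  · simp [← mul_sum, hu_sum]
  · simp only [← sq_abs ((#S : ℝ)⁻¹ * u _), hv_abs, ite_pow, zero_pow two_ne_zero,
      sum_ite_mem, univ_inter, sum_const, nsmul_eq_mul]
    field_simp

end

theorem stmt_10_general (p : ℕ) (ρ : ℝ) (hρ0 : 0 ≤ ρ) (hρ1 : ρ < 1)
    (S : Finset (Fin p)) (s : ℕ) (hs : s = S.card) (hse : Even s)
    (hs2 : 2 ≤ s) :
    (∃ v : Fin p → ℝ, (∑ j ∈ S, |v j|) = 1 ∧ (∑ j ∈ Sᶜ, |v j|) ≤ 3 ∧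
        (s : ℝ) * (v ⬝ᵥ (((1 - ρ) • (1 : Matrix (Fin p) (Fin p) ℝ) +
          ρ • Matrix.of (fun _ _ => (1 : ℝ))).mulVec v)) = 1 - ρ) ∧
    sInf ((fun v : Fin p → ℝ =>
        (s : ℝ) * (v ⬝ᵥ (((1 - ρ) • (1 : Matrix (Fin p) (Fin p) ℝ) +
          ρ • Matrix.of (fun _ _ => (1 : ℝ))).mulVec v))) ''
        {v | (∑ j ∈ S, |v j|) = 1 ∧ (∑ j ∈ Sᶜ, |v j|) ≤ 3}) = 1 - ρ := by
  subst hs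
  simp only [dotProduct_smul_one_add_smul_ones_mulVec]
  obtain ⟨v, hv_S, hv_Sc, hv_sum, hv_sq⟩ :=
    exists_abs_sum_eq_one_sum_eq_zero (card_pos.1 (by omega)) hse
  have hv_mem : ∑ j ∈ S, |v j| = 1 ∧ ∑ j ∈ Sᶜ, |v j| ≤ 3 :=
    ⟨hv_S, by rw [sum_eq_zero fun j hj => by rw [hv_Sc j (mem_compl.1 hj), abs_zero]]; norm_num⟩
  have hv_val : (#S : ℝ) * ((1 - ρ) * ∑ i, v i ^ 2 + ρ * (∑ i, v i) ^ 2) = 1 - ρ := by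
    rw [hv_sum, mul_add, mul_left_comm, hv_sq]; ring
  have hleast : IsLeast ((fun v : Fin p → ℝ =>
      (#S : ℝ) * ((1 - ρ) * ∑ i, v i ^ 2 + ρ * (∑ i, v i) ^ 2)) ''
        {v | (∑ j ∈ S, |v j|) = 1 ∧ (∑ j ∈ Sᶜ, |v j|) ≤ 3}) (1 - ρ) :=
    ⟨⟨v, hv_mem, hv_val⟩, by
      rintro _ ⟨w, hw, rfl⟩; exact one_sub_le_card_mul_quadratic S hρ0 hρ1.le hw.1⟩
  exact ⟨⟨v, hv_mem.1, hv_mem.2, hv_val⟩, hleast.csInf_eq⟩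

theorem stmt_10 (p : ℕ) (hp : 2 ≤ p) (ρ : ℝ) (hρ0 : 0 ≤ ρ) (hρ1 : ρ < 1)
    (S : Finset (Fin p)) (s : ℕ) (hs : s = S.card) (hse : Even s)
    (hs2 : 2 ≤ s) :
    (∃ v : Fin p → ℝ, (∑ j ∈ S, |v j|) = 1 ∧ (∑ j ∈ Sᶜ, |v j|) ≤ 3 ∧
        (s : ℝ) * (v ⬝ᵥ (((1 - ρ) • (1 : Matrix (Fin p) (Fin p) ℝ) +
          ρ • Matrix.of (fun _ _ => (1 : ℝ))).mulVec v)) = 1 - ρ) ∧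
    sInf ((fun v : Fin p → ℝ =>
        (s : ℝ) * (v ⬝ᵥ (((1 - ρ) • (1 : Matrix (Fin p) (Fin p) ℝ) +
          ρ • Matrix.of (fun _ _ => (1 : ℝ))).mulVec v))) ''
        {v | (∑ j ∈ S, |v j|) = 1 ∧ (∑ j ∈ Sᶜ, |v j|) ≤ 3}) = 1 - ρ :=
  stmt_10_general p ρ hρ0 hρ1 S s hs hse hs2
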